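/- Let Ω ⊆ ℝ² be a nonempty open set and let u : ℝ² → ℝ be locally integrable on Ω with weak gradient g = (g₁,g₂) on Ω. Then for every nonempty open subset U ⊆ Ω, the set {x = (x₁,x₂) ∈ U : g(x) ≠ (−x₂, x₁)} has positive two-dimensional Lebesgue measure. Consequently, the set where the Heisenberg contact system fails for the graph map f(x₁,x₂) = (x₁, x₂, u(x₁,x₂)) meets every nonempty open subset of Ω in positive measure, so its closure is all of Ω. -/

import Mathlib

open MeasureTheory
open scoped ENNReal

/-- `u ∈ W^{1,1}_loc(Ω)` with weak gradient `(g₁, g₂)`: `u`, `g₁`, `g₂` are locally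
integrable on the open set `Ω ⊆ ℝ²` and the integration-by-parts identities
`∫_Ω u ∂ᵢφ = −∫_Ω gᵢ φ` hold for every smooth `φ` with compact support in `Ω`. -/
def HasWeakGradientOn (u g₁ g₂ : ℝ × ℝ → ℝ) (Ω : Set (ℝ × ℝ)) : Prop :=
  LocallyIntegrableOn u Ω volume ∧
  LocallyIntegrableOn g₁ Ω volume ∧
  LocallyIntegrableOn g₂ Ω volume ∧
  (∀ φ : ℝ × ℝ → ℝ, ContDiff ℝ (⊤ : ℕ∞) φ → HasCompactSupport φ → tsupport φ ⊆ Ω →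
    ∫ x in Ω, u x * fderiv ℝ φ x (1, 0) = -∫ x in Ω, g₁ x * φ x) ∧
  (∀ φ : ℝ × ℝ → ℝ, ContDiff ℝ (⊤ : ℕ∞) φ → HasCompactSupport φ → tsupport φ ⊆ Ω →
    ∫ x in Ω, u x * fderiv ℝ φ x (0, 1) = -∫ x in Ω, g₂ x * φ x)

/-! A weak gradient is weakly curl-free: testing its two defining identities against `∂₂ψ`
and `∂₁ψ` and using the symmetry of second derivatives gives `∫ g₁ ∂₂ψ = ∫ g₂ ∂₁ψ`. The field
`(−x₂, x₁)` instead has curl `2`: integrating by parts, `∫ −x₂ ∂₂ψ = ∫ ψ` and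
`∫ x₁ ∂₁ψ = −∫ ψ`. So if `g` agreed a.e. with this field on an open `U`, a bump function `ψ`
supported in `U` would satisfy `∫ ψ = −∫ ψ`, although `∫ ψ > 0`. -/

open Set Filter

section Calculus

variable {E F : Type*} [NormedAddCommGroup E] [NormedSpace ℝ E] [NormedAddCommGroup F]
  [NormedSpace ℝ F]

lemma fderiv_fderiv_apply_comm {ψ : E → F} (hψ : ContDiff ℝ 2 ψ) (x v w : E) :
    fderiv ℝ (fun y => fderiv ℝ ψ y v) x w = fderiv ℝ (fun y => fderiv ℝ ψ y w) x v := by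
  have hdiff : Differentiable ℝ (fderiv ℝ ψ) :=
    (hψ.fderiv_right (m := 1) le_rfl).differentiable one_ne_zero
  simp only [fderiv_clm_apply (hdiff x) (differentiableAt_const _), fderiv_const_apply,
    ContinuousLinearMap.comp_zero, zero_add, ContinuousLinearMap.flip_apply]
  exact (hψ.contDiffAt.isSymmSndFDerivAt (by simp)) w v

lemma ContDiff.fderiv_apply_const {ψ : E → F} (hψ : ContDiff ℝ (⊤ : ℕ∞) ψ) (v : E) :
    ContDiff ℝ (⊤ : ℕ∞) (fun x => fderiv ℝ ψ x v) :=
  (hψ.fderiv_right le_rfl).clm_apply contDiff_const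

variable [FiniteDimensional ℝ E] [MeasurableSpace E] [BorelSpace E] (μ : Measure E)
  [μ.IsAddHaarMeasure]

lemma integral_clm_mul_fderiv_eq_neg {ψ : E → ℝ} (hψ : ContDiff ℝ 1 ψ)
    (hψc : HasCompactSupport ψ) (ℓ : E →L[ℝ] ℝ) (v : E) :
    ∫ x, ℓ x * fderiv ℝ ψ x v ∂μ = -(ℓ v * ∫ x, ψ x ∂μ) := by
  have hψ' : Continuous (fun x => fderiv ℝ ψ x v) :=
    (hψ.continuous_fderiv one_ne_zero).clm_apply continuous_const
  rw [integral_mul_fderiv_eq_neg_fderiv_mul_of_integrable (f := ℓ) (g := ψ)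
    (by simpa only [ContinuousLinearMap.fderiv] using
      (hψ.continuous.integrable_of_hasCompactSupport hψc).const_mul (ℓ v))
    ((ℓ.continuous.mul hψ').integrable_of_hasCompactSupport (hψc.fderiv_apply ℝ v).mul_left)
    ((ℓ.continuous.mul hψ.continuous).integrable_of_hasCompactSupport hψc.mul_left)
    (fun x _ => ℓ.differentiableAt) (fun x _ => hψ.differentiable one_ne_zero x)]
  simp only [ContinuousLinearMap.fderiv, integral_const_mul]

end Calculus

lemma setIntegral_mul_eq_integral_of_ae_eq {α : Type*} [MeasurableSpace α] {μ : Measure α}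
    {Ω U : Set α} {g h φ : α → ℝ} (hUΩ : U ⊆ Ω) (hφU : Function.support φ ⊆ U)
    (hgh : ∀ᵐ x ∂μ, x ∈ U → g x = h x) :
    ∫ x in Ω, g x * φ x ∂μ = ∫ x, h x * φ x ∂μ := by
  have hφ : ∀ x, x ∉ U → φ x = 0 := fun x hx => Function.notMem_support.mp (mt (@hφU x) hx)
  calc ∫ x in Ω, g x * φ x ∂μ = ∫ x in Ω, h x * φ x ∂μ := by
        refine integral_congr_ae (ae_restrict_of_ae ?_)
        filter_upwards [hgh] with x hx
        by_cases hxU : x ∈ U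
        · rw [hx hxU]
        · simp [hφ x hxU]
    _ = ∫ x, h x * φ x ∂μ :=
        setIntegral_eq_integral_of_forall_compl_eq_zero fun x hx => by
          simp [hφ x (mt (@hUΩ x) hx)]

namespace HasWeakGradientOn

variable {u g₁ g₂ : ℝ × ℝ → ℝ} {Ω : Set (ℝ × ℝ)}

theorem weak_curl_eq_zero (hu : HasWeakGradientOn u g₁ g₂ Ω) {ψ : ℝ × ℝ → ℝ}
    (hψ : ContDiff ℝ (⊤ : ℕ∞) ψ) (hψc : HasCompactSupport ψ) (hψΩ : tsupport ψ ⊆ Ω) :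
    ∫ x in Ω, g₁ x * fderiv ℝ ψ x (0, 1) = ∫ x in Ω, g₂ x * fderiv ℝ ψ x (1, 0) := by
  have h₁ := hu.2.2.2.1 _ (hψ.fderiv_apply_const (0, 1)) (hψc.fderiv_apply ℝ _)
    ((tsupport_fderiv_apply_subset ℝ _).trans hψΩ)
  have h₂ := hu.2.2.2.2 _ (hψ.fderiv_apply_const (1, 0)) (hψc.fderiv_apply ℝ _)
    ((tsupport_fderiv_apply_subset ℝ _).trans hψΩ)
  have hsymm : ∀ x, u x * fderiv ℝ (fun y => fderiv ℝ ψ y (0, 1)) x (1, 0) =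
      u x * fderiv ℝ (fun y => fderiv ℝ ψ y (1, 0)) x (0, 1) := fun x => by
    rw [fderiv_fderiv_apply_comm (hψ.of_le (by norm_cast))]
  rw [integral_congr_ae (ae_of_all _ hsymm)] at h₁
  exact neg_injective (h₁.symm.trans h₂)

theorem not_ae_eq_rotation (hu : HasWeakGradientOn u g₁ g₂ Ω) {U : Set (ℝ × ℝ)}
    (hU : IsOpen U) (hUne : U.Nonempty) (hUΩ : U ⊆ Ω) :
    ¬ ∀ᵐ x, x ∈ U → (g₁ x, g₂ x) = (-x.2, x.1) := by
  intro hg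
  obtain ⟨x₀, hx₀⟩ := hUne
  obtain ⟨ε, hε, hball⟩ := Metric.isOpen_iff.mp hU x₀ hx₀
  let ψ : ContDiffBump x₀ := ⟨ε / 4, ε / 2, by positivity, by linarith⟩
  have hψU : tsupport ψ ⊆ U := by
    rw [ψ.tsupport_eq]
    exact (Metric.closedBall_subset_ball (by change ε / 2 < ε; linarith)).trans hball
  have hψ : ContDiff ℝ (⊤ : ℕ∞) ψ := ψ.contDiff
  have hψ₁ : ContDiff ℝ 1 ψ := ψ.contDiff
  have hcurl := hu.weak_curl_eq_zero hψ ψ.hasCompactSupport (hψU.trans hUΩ)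
  rw [setIntegral_mul_eq_integral_of_ae_eq hUΩ
      (((subset_tsupport _).trans (tsupport_fderiv_apply_subset ℝ _)).trans hψU)
      (hg.mono fun x hx hxU => congrArg Prod.fst (hx hxU)),
    setIntegral_mul_eq_integral_of_ae_eq hUΩ
      (((subset_tsupport _).trans (tsupport_fderiv_apply_subset ℝ _)).trans hψU)
      (hg.mono fun x hx hxU => congrArg Prod.snd (hx hxU))] at hcurl
  have h₂ := integral_clm_mul_fderiv_eq_neg volume hψ₁
    ψ.hasCompactSupport (-ContinuousLinearMap.snd ℝ ℝ ℝ) (0, 1)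
  have h₁ := integral_clm_mul_fderiv_eq_neg volume hψ₁
    ψ.hasCompactSupport (ContinuousLinearMap.fst ℝ ℝ ℝ) (1, 0)
  simp only [neg_apply, ContinuousLinearMap.coe_snd',
    ContinuousLinearMap.coe_fst'] at h₁ h₂
  have hpos : 0 < ∫ x, ψ x := ψ.integral_pos
  linarith

end HasWeakGradientOn

theorem contact_failure_set_dense_general
    (Ω : Set (ℝ × ℝ)) (hΩ : IsOpen Ω)
    (u g₁ g₂ : ℝ × ℝ → ℝ) (hu : HasWeakGradientOn u g₁ g₂ Ω) :
    (∀ U : Set (ℝ × ℝ), IsOpen U → U.Nonempty → U ⊆ Ω →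
      0 < volume {x ∈ U | (g₁ x, g₂ x) ≠ (-x.2, x.1)}) ∧
    Ω ⊆ closure {x ∈ Ω | (g₁ x, g₂ x) ≠ (-x.2, x.1)} := by
  have hpos : ∀ U : Set (ℝ × ℝ), IsOpen U → U.Nonempty → U ⊆ Ω →
      0 < volume {x ∈ U | (g₁ x, g₂ x) ≠ (-x.2, x.1)} := by
    intro U hU hUne hUΩ
    refine pos_iff_ne_zero.mpr fun h0 => hu.not_ae_eq_rotation hU hUne hUΩ ?_
    filter_upwards [measure_eq_zero_iff_ae_notMem.mp h0] with x hx hxU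
    exact not_not.mp fun hne => hx ⟨hxU, hne⟩
  refine ⟨hpos, fun x hx => mem_closure_iff.mpr fun o ho hxo => ?_⟩
  obtain ⟨y, ⟨hyo, hyΩ⟩, hy⟩ := nonempty_of_measure_ne_zero
    (hpos _ (ho.inter hΩ) ⟨x, hxo, hx⟩ inter_subset_right).ne'
  exact ⟨y, hyo, hyΩ, hy⟩

/-- For `u ∈ W^{1,1}_loc(Ω)` with weak gradient `g`, the set where the Heisenberg contact
system for the graph map `f(x₁,x₂) = (x₁,x₂,u(x₁,x₂))` fails (i.e. `g(x) ≠ (−x₂, x₁)`)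
meets every nonempty open subset of `Ω` in positive Lebesgue measure; consequently its
closure contains all of `Ω`. -/
theorem contact_failure_set_dense
    (Ω : Set (ℝ × ℝ)) (hΩ : IsOpen Ω) (hne : Ω.Nonempty)
    (u g₁ g₂ : ℝ × ℝ → ℝ) (hu : HasWeakGradientOn u g₁ g₂ Ω) :
    (∀ U : Set (ℝ × ℝ), IsOpen U → U.Nonempty → U ⊆ Ω →
      0 < volume {x ∈ U | (g₁ x, g₂ x) ≠ (-x.2, x.1)}) ∧
    Ω ⊆ closure {x ∈ Ω | (g₁ x, g₂ x) ≠ (-x.2, x.1)} :=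
  contact_failure_set_dense_general Ω hΩ u g₁ g₂ hu
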